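/- Let p_j denote the j-th prime number in increasing order (p_1 = 2, p_2 = 3, …). Let n ≥ 1 be an integer, let J : ℕ → {1,2,3,…} be a function each of whose fibers J^{−1}(j) has at most n elements, and let d : ℕ → {1,2,3,…}. Define N(k) = p_{J(k)}^{d(k)}. Suppose the set D = {j : there exists k with J(k) = j and d(k) = 1} has positive lower natural density, i.e. liminf_{ν→∞} #(D ∩ {1,…,ν})/ν > 0. Then lim_{s→1⁺} (Σ_{k : d(k) ≥ 2} N(k)^{−s}) / (Σ_{k∈ℕ} N(k)^{−s}) = 0. (For each real s > 1 both series converge, and the denominator tends to infinity as s → 1⁺.) -/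

import Mathlib

/-- The `j`-th prime in increasing order, 1-indexed: `nthPrime 1 = 2`,
`nthPrime 2 = 3`, …  (`Nat.nth Nat.Prime` is 0-indexed). -/
noncomputable def nthPrime (j : ℕ) : ℕ := Nat.nth Nat.Prime (j - 1)

/-! Each norm `N(k) = p_{J(k)}^{d(k)}` is at least `J(k) + 1`, and at least `(J(k) + 1)²` when
`d(k) ≥ 2`. As the fibers of `J` are bounded, the full series therefore converges for `s > 1`
and its part over `d(k) ≥ 2` stays bounded as `s → 1⁺`. The full series blows up because it
dominates `∑_{j ∈ D} 1/p_j`: positive lower density puts the `m`-th element of `D` below `C m`,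
so this sum dominates `∑_m 1/p_{Cm}`, which is at least `(1/C) ∑_q 1/p_q = ∞`. -/

open Filter Set Topology

lemma summable_comp_of_ncard_fiber_le {α β : Type*} {g : α → β} {n : ℕ}
    (hfib : ∀ b, {a | g a = b}.Finite ∧ {a | g a = b}.ncard ≤ n)
    {f : β → ℝ} (hf0 : 0 ≤ f) (hf : Summable f) :
    Summable fun a => f (g a) := by
  classical
  refine summable_of_sum_le (c := n * ∑' b, f b) (fun a => hf0 (g a)) fun u => ?_
  have hcard : ∀ b, (({a ∈ u | g a = b} : Finset α).card : ℝ) ≤ n := fun b => by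
    have hsub : (({a ∈ u | g a = b} : Finset α) : Set α) ⊆ {a | g a = b} :=
      fun a ha => (Finset.mem_filter.1 ha).2
    exact_mod_cast (ncard_coe_finset _ ▸ ncard_le_ncard hsub (hfib b).1).trans (hfib b).2
  calc ∑ a ∈ u, f (g a)
      = ∑ b ∈ u.image g, ({a ∈ u | g a = b} : Finset α).card • f b := Finset.sum_comp _ _
    _ ≤ ∑ b ∈ u.image g, n * f b := Finset.sum_le_sum fun b _ => by
      rw [nsmul_eq_mul]; exact mul_le_mul_of_nonneg_right (hcard b) (hf0 b)
    _ = n * ∑ b ∈ u.image g, f b := (Finset.mul_sum ..).symm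
    _ ≤ n * ∑' b, f b := by gcongr; exact hf.sum_le_tsum _ fun b _ => hf0 b

lemma Nat.setOf_div_eq_Ico {C : ℕ} (hC : 0 < C) (j : ℕ) :
    {k | k / C = j} = Ico (j * C) (j * C + C) := by
  ext k
  simp only [mem_ofPred_eq, mem_Ico, Nat.div_eq_iff hC]
  omega

lemma not_summable_comp_mul_of_antitone {f : ℕ → ℝ} (hf : Antitone f) (hf0 : 0 ≤ f)
    (hns : ¬ Summable f) {C : ℕ} (hC : 0 < C) : ¬ Summable fun m => f (C * m) := by
  intro h
  have hfib : ∀ j, {k | k / C = j}.Finite ∧ {k | k / C = j}.ncard ≤ C := fun j => by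
    simp [Nat.setOf_div_eq_Ico hC]
  have hdiv : Summable fun k => f (C * (k / C)) :=
    summable_comp_of_ncard_fiber_le (f := fun m => f (C * m)) hfib (fun j => hf0 (C * j)) h
  exact hns (hdiv.of_nonneg_of_le (fun k => hf0 k) fun k => hf (Nat.mul_div_le k C))

section LowerDensity

variable {D : Set ℕ}

lemma exists_pos_eventually_mul_le_ncard
    (hD : 0 < liminf (fun ν : ℕ => ((D ∩ Icc 1 ν).ncard : ℝ) / ν) atTop) :
    ∃ δ : ℝ, 0 < δ ∧ ∀ᶠ ν : ℕ in atTop, δ * ν ≤ (D ∩ Icc 1 ν).ncard := by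
  refine ⟨_, half_pos hD, ?_⟩
  filter_upwards [eventually_lt_of_lt_liminf (half_lt_self hD)
    (isBoundedUnder_of ⟨0, fun ν => by positivity⟩), eventually_ge_atTop 1] with ν hν hν1
  exact ((lt_div_iff₀ (by exact_mod_cast hν1)).1 hν).le

lemma infinite_of_eventually_mul_le_ncard {δ : ℝ} (hδ : 0 < δ)
    (h : ∀ᶠ ν : ℕ in atTop, δ * ν ≤ (D ∩ Icc 1 ν).ncard) : D.Infinite := by
  intro hfin
  obtain ⟨ν, hν, hlarge⟩ := (h.and (eventually_gt_atTop ⌈D.ncard / δ⌉₊)).exists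
  have hle : ((D ∩ Icc 1 ν).ncard : ℝ) ≤ D.ncard := by
    exact_mod_cast ncard_le_ncard inter_subset_left hfin
  have : (D.ncard : ℝ) / δ < ν := (Nat.le_ceil _).trans_lt (by exact_mod_cast hlarge)
  rw [div_lt_iff₀ hδ] at this
  linarith

lemma ncard_inter_Icc_nth_le (hD : D.Infinite) (m : ℕ) :
    (D ∩ Icc 1 (Nat.nth (· ∈ D) m)).ncard ≤ m + 1 := by
  classical
  set x := Nat.nth (· ∈ D) m
  have hcount : Nat.count (· ∈ D) (x + 1) = m + 1 := by
    rw [Nat.count_succ, Nat.count_nth_of_infinite (p := (· ∈ D)) hD,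
      if_pos (Nat.nth_mem_of_infinite (p := (· ∈ D)) hD m)]
  have hsub : D ∩ Icc 1 x ⊆ ({y ∈ Finset.range (x + 1) | y ∈ D} : Finset ℕ) := by
    intro y ⟨hyD, _, hyx⟩
    simpa [Nat.lt_succ_iff] using ⟨hyx, hyD⟩
  refine (ncard_le_ncard hsub (Finset.finite_toSet _)).trans ?_
  rw [ncard_coe_finset, ← Nat.count_eq_card_filter_range, hcount]

lemma exists_eventually_nth_le_mul {δ : ℝ} (hδ : 0 < δ)
    (h : ∀ᶠ ν : ℕ in atTop, δ * ν ≤ (D ∩ Icc 1 ν).ncard) (hD : D.Infinite) :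
    ∃ C > 0, ∀ᶠ m in atTop, Nat.nth (· ∈ D) m ≤ C * m := by
  have hmono := Nat.nth_strictMono (p := (· ∈ D)) hD
  refine ⟨⌈2 / δ⌉₊, Nat.ceil_pos.2 (by positivity), ?_⟩
  filter_upwards [hmono.tendsto_atTop.eventually h, eventually_ge_atTop 1] with m hm hm1
  have h2m : δ * Nat.nth (· ∈ D) m ≤ 2 * m := by
    have : ((D ∩ Icc 1 (Nat.nth (· ∈ D) m)).ncard : ℝ) ≤ m + 1 := by
      exact_mod_cast ncard_inter_Icc_nth_le hD m
    have : (1 : ℝ) ≤ m := by exact_mod_cast hm1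
    linarith
  have : (Nat.nth (· ∈ D) m : ℝ) ≤ ⌈2 / δ⌉₊ * m := calc
    (Nat.nth (· ∈ D) m : ℝ) ≤ 2 / δ * m := by
      rw [div_mul_eq_mul_div, le_div_iff₀ hδ]; linarith
    _ ≤ ⌈2 / δ⌉₊ * m := by gcongr; exact Nat.le_ceil _
  exact_mod_cast this

theorem not_summable_subtype_of_antitone {f : ℕ → ℝ} (hf : Antitone f) (hf0 : 0 ≤ f)
    (hns : ¬ Summable f)
    (hD : 0 < liminf (fun ν : ℕ => ((D ∩ Icc 1 ν).ncard : ℝ) / ν) atTop) :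
    ¬ Summable fun j : D => f j := by
  obtain ⟨δ, hδ, hdens⟩ := exists_pos_eventually_mul_le_ncard hD
  have hinf := infinite_of_eventually_mul_le_ncard hδ hdens
  obtain ⟨C, hC, hnth⟩ := exists_eventually_nth_le_mul hδ hdens hinf
  intro h
  have hE : Summable fun m => f (Nat.nth (· ∈ D) m) :=
    h.comp_injective (i := fun m => (⟨_, Nat.nth_mem_of_infinite (p := (· ∈ D)) hinf m⟩ : D))
      fun a b hab => Nat.nth_injective (p := (· ∈ D)) hinf (congrArg Subtype.val hab)
  refine not_summable_comp_mul_of_antitone hf hf0 hns hC (hE.of_norm_bounded_eventually_nat ?_)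
  filter_upwards [hnth] with m hm
  rw [Real.norm_of_nonneg (hf0 _)]
  exact hf hm

end LowerDensity

lemma le_nthPrime (j : ℕ) : j + 1 ≤ nthPrime j := by
  have := Nat.add_two_le_nth_prime (j - 1)
  unfold nthPrime
  omega

lemma nthPrime_pos (j : ℕ) : 0 < nthPrime j := (Nat.prime_nth_prime _).pos

lemma le_nthPrime_pow {j e : ℕ} (he : e ≠ 0) : j + 1 ≤ nthPrime j ^ e :=
  (le_nthPrime j).trans (Nat.le_self_pow he _)

lemma sq_le_nthPrime_pow {j e : ℕ} (he : 2 ≤ e) : (j + 1) ^ 2 ≤ nthPrime j ^ e :=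
  (Nat.pow_le_pow_left (le_nthPrime j) 2).trans (Nat.pow_le_pow_right (nthPrime_pos j) he)

lemma antitone_inv_nthPrime : Antitone fun j => (nthPrime j : ℝ)⁻¹ := fun i j hij =>
  inv_anti₀ (by exact_mod_cast nthPrime_pos i) <| by
    exact_mod_cast Nat.nth_monotone Nat.infinite_setOfPred_prime (Nat.sub_le_sub_right hij 1)

lemma not_summable_inv_nthPrime : ¬ Summable fun j => (nthPrime j : ℝ)⁻¹ := by
  intro h
  apply Nat.Primes.not_summable_one_div
  have hnth : ∀ p : Nat.Primes, nthPrime (Nat.count Nat.Prime p + 1) = p := fun p =>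
    Nat.nth_count p.prop
  refine (h.comp_injective (i := fun p : Nat.Primes => Nat.count Nat.Prime p + 1)
    fun p q hpq => ?_).congr fun p => by simp [hnth, one_div]
  exact Subtype.ext (by simpa [hnth] using congrArg nthPrime hpq)

lemma summable_add_one_rpow_neg_comp {α : Type*} {g : α → ℕ} {n : ℕ}
    (hfib : ∀ j, {a | g a = j}.Finite ∧ {a | g a = j}.ncard ≤ n) {s : ℝ} (hs : 1 < s) :
    Summable fun a => ((g a : ℝ) + 1) ^ (-s) := by
  refine summable_comp_of_ncard_fiber_le (f := fun j : ℕ => ((j : ℝ) + 1) ^ (-s)) hfib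
    (fun j => by positivity) ?_
  exact_mod_cast (summable_nat_add_iff 1).2 (Real.summable_nat_rpow.2 (by linarith))

lemma rpow_neg_le_rpow_neg_two {x y s : ℝ} (hy : 1 ≤ y) (hxy : y ^ 2 ≤ x) (hs : 1 ≤ s) :
    x ^ (-s) ≤ y ^ (-2 : ℝ) := calc
  x ^ (-s) ≤ (y ^ 2) ^ (-s) := Real.rpow_le_rpow_of_nonpos (by positivity) hxy (by linarith)
  _ = y ^ (-(2 * s)) := by
    rw [← Real.rpow_natCast, ← Real.rpow_mul (by positivity)]; norm_num
  _ ≤ y ^ (-2 : ℝ) := Real.rpow_le_rpow_of_exponent_le hy (by linarith)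

lemma tendsto_tsum_rpow_neg_nhdsGT_one {ι : Type*} {N : ι → ℝ} (hN : ∀ i, 0 < N i)
    (hsum : ∀ s : ℝ, 1 < s → Summable fun i => N i ^ (-s))
    (hns : ¬ Summable fun i => (N i)⁻¹) :
    Tendsto (fun s : ℝ => ∑' i, N i ^ (-s)) (𝓝[>] 1) atTop := by
  refine tendsto_atTop.2 fun b => ?_
  obtain ⟨u, hu⟩ : ∃ u : Finset ι, b < ∑ i ∈ u, (N i)⁻¹ := by
    by_contra! h
    exact hns (summable_of_sum_le (fun i => (inv_pos.2 (hN i)).le) h)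
  have hcont : Continuous fun s : ℝ => ∑ i ∈ u, N i ^ (-s) :=
    continuous_finsetSum _ fun i _ => (Real.continuous_const_rpow (hN i).ne').comp continuous_neg
  have hu1 : b < ∑ i ∈ u, N i ^ (-(1 : ℝ)) := by simpa [Real.rpow_neg_one] using hu
  filter_upwards [nhdsWithin_le_nhds (hcont.continuousAt.eventually (eventually_gt_nhds hu1)),
    self_mem_nhdsWithin] with s hs hs1
  exact hs.le.trans ((hsum s hs1).sum_le_tsum _ fun i _ => (Real.rpow_pos_of_pos (hN i) _).le)

section Knots

variable {J d : ℕ → ℕ}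

lemma not_summable_inv_nthPrime_pow
    (hD : 0 < liminf (fun ν : ℕ =>
      (({j : ℕ | ∃ k, J k = j ∧ d k = 1} ∩ Icc 1 ν).ncard : ℝ) / ν) atTop) :
    ¬ Summable fun k => ((nthPrime (J k) ^ d k : ℕ) : ℝ)⁻¹ := by
  intro h
  refine not_summable_subtype_of_antitone antitone_inv_nthPrime
    (fun j => by positivity) not_summable_inv_nthPrime hD ?_
  choose k hk using fun j : {j : ℕ | ∃ k, J k = j ∧ d k = 1} => j.prop
  have hinj : Function.Injective k := fun a b hab =>
    Subtype.ext <| by rw [← (hk a).1, ← (hk b).1, hab]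
  exact (h.comp_injective hinj).congr fun j => by simp [(hk j).1, (hk j).2]

lemma summable_nthPrime_pow_rpow_neg {n : ℕ} (hd : ∀ k, 1 ≤ d k)
    (hfib : ∀ j, {k | J k = j}.Finite ∧ {k | J k = j}.ncard ≤ n) {s : ℝ} (hs : 1 < s) :
    Summable fun k => ((nthPrime (J k) ^ d k : ℕ) : ℝ) ^ (-s) :=
  (summable_add_one_rpow_neg_comp hfib hs).of_nonneg_of_le (fun k => by positivity) fun k =>
    Real.rpow_le_rpow_of_nonpos (by positivity)
      (by exact_mod_cast le_nthPrime_pow (Nat.one_le_iff_ne_zero.1 (hd k))) (by linarith)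

lemma tsum_ite_two_le_nthPrime_pow_rpow_neg_le {n : ℕ}
    (hfib : ∀ j, {k | J k = j}.Finite ∧ {k | J k = j}.ncard ≤ n) {s : ℝ} (hs : 1 < s) :
    (∑' k, if 2 ≤ d k then ((nthPrime (J k) ^ d k : ℕ) : ℝ) ^ (-s) else 0) ≤
      ∑' k, ((J k : ℝ) + 1) ^ (-2 : ℝ) := by
  have hterm : ∀ k, (if 2 ≤ d k then ((nthPrime (J k) ^ d k : ℕ) : ℝ) ^ (-s) else 0) ≤
      ((J k : ℝ) + 1) ^ (-2 : ℝ) := fun k => by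
    split_ifs with h2
    · exact rpow_neg_le_rpow_neg_two (by simp) (by exact_mod_cast sq_le_nthPrime_pow h2) hs.le
    · positivity
  have hsum := summable_add_one_rpow_neg_comp hfib one_lt_two
  refine Summable.tsum_le_tsum hterm (hsum.of_nonneg_of_le (fun k => ?_) hterm) hsum
  split_ifs <;> positivity

end Knots

theorem stmt6_general (n : ℕ) (J d : ℕ → ℕ)
    (hd : ∀ k, 1 ≤ d k)
    (hfib : ∀ j : ℕ, {k : ℕ | J k = j}.Finite ∧ {k : ℕ | J k = j}.ncard ≤ n)
    (hD : 0 < Filter.liminf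
      (fun ν : ℕ =>
        ((({j : ℕ | ∃ k, J k = j ∧ d k = 1}) ∩ Set.Icc 1 ν).ncard : ℝ) / ν)
      Filter.atTop) :
    (∀ s : ℝ, 1 < s →
      Summable (fun k : ℕ => ((nthPrime (J k) ^ d k : ℕ) : ℝ) ^ (-s))) ∧
    Filter.Tendsto
      (fun s : ℝ => ∑' k : ℕ, ((nthPrime (J k) ^ d k : ℕ) : ℝ) ^ (-s))
      (nhdsWithin 1 (Set.Ioi 1)) Filter.atTop ∧
    Filter.Tendsto
      (fun s : ℝ =>
        (∑' k : ℕ, if 2 ≤ d k then ((nthPrime (J k) ^ d k : ℕ) : ℝ) ^ (-s) else 0) /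
        (∑' k : ℕ, ((nthPrime (J k) ^ d k : ℕ) : ℝ) ^ (-s)))
      (nhdsWithin 1 (Set.Ioi 1)) (nhds 0) := by
  have hpos : ∀ k, (0 : ℝ) < (nthPrime (J k) ^ d k : ℕ) := fun k => by
    exact_mod_cast pow_pos (nthPrime_pos _) _
  have hsum := fun s (hs : 1 < s) => summable_nthPrime_pow_rpow_neg hd hfib hs
  have hdiv := tendsto_tsum_rpow_neg_nhdsGT_one hpos hsum (not_summable_inv_nthPrime_pow hD)
  refine ⟨hsum, hdiv, tendsto_bdd_div_atTop_nhds_zero (b := 0)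
    (B := ∑' k, ((J k : ℝ) + 1) ^ (-2 : ℝ)) ?_ ?_ hdiv⟩
  · exact Eventually.of_forall fun s => tsum_nonneg fun k => by split_ifs <;> positivity
  · filter_upwards [self_mem_nhdsWithin] with s hs
    using tsum_ite_two_le_nthPrime_pow_rpow_neg_le hfib hs

/-- **Knots of degree ≥ 2 have Dirichlet density 0.**
Let `n ≥ 1`, let `J : ℕ → {1,2,…}` have all fibers of at most `n` elements, and
let `d : ℕ → {1,2,…}`.  Set `N(k) = p_{J(k)}^{d(k)}`.  Suppose the set
`D = {j : ∃ k, J(k) = j ∧ d(k) = 1}` has positive lower natural density.  Then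
for each `s > 1` the series `Σ_k N(k)^{−s}` converges, it tends to `∞` as
`s → 1⁺`, and `(Σ_{k : d(k) ≥ 2} N(k)^{−s})/(Σ_k N(k)^{−s}) → 0` as `s → 1⁺`. -/
theorem stmt6 (n : ℕ) (hn : 1 ≤ n) (J d : ℕ → ℕ)
    (hJ : ∀ k, 1 ≤ J k) (hd : ∀ k, 1 ≤ d k)
    (hfib : ∀ j : ℕ, {k : ℕ | J k = j}.Finite ∧ {k : ℕ | J k = j}.ncard ≤ n)
    (hD : 0 < Filter.liminf
      (fun ν : ℕ =>
        ((({j : ℕ | ∃ k, J k = j ∧ d k = 1}) ∩ Set.Icc 1 ν).ncard : ℝ) / ν)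
      Filter.atTop) :
    (∀ s : ℝ, 1 < s →
      Summable (fun k : ℕ => ((nthPrime (J k) ^ d k : ℕ) : ℝ) ^ (-s))) ∧
    Filter.Tendsto
      (fun s : ℝ => ∑' k : ℕ, ((nthPrime (J k) ^ d k : ℕ) : ℝ) ^ (-s))
      (nhdsWithin 1 (Set.Ioi 1)) Filter.atTop ∧
    Filter.Tendsto
      (fun s : ℝ =>
        (∑' k : ℕ, if 2 ≤ d k then ((nthPrime (J k) ^ d k : ℕ) : ℝ) ^ (-s) else 0) /
        (∑' k : ℕ, ((nthPrime (J k) ^ d k : ℕ) : ℝ) ^ (-s)))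
      (nhdsWithin 1 (Set.Ioi 1)) (nhds 0) :=
  stmt6_general n J d hd hfib hD
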